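/- arXiv:2406.09882 — 4 statements merged into one kernel-verified Lean document; each statement's English description precedes it below -/
import Mathlib

section
/- Let Ω = {v_1, …, v_n} ⊂ ℝ^d with ‖v‖ ≤ δ for all v ∈ Ω (Euclidean norm), let u0 ∈ ℝ^d, and let α_v ∈ [α_NH, α_H] for each v ∈ Ω with 0 < α_NH ≤ α_H, and β ≥ 0. Define G(p) = (β u0 + Σ_{v∈Ω} α_v p_v · v) / (β + Σ_{v∈Ω} α_v p_v) on the probability simplex {p ∈ [0,1]^n : Σ_v p_v = 1}. Then G is Lipschitz on the simplex with constant (3δ + ‖u0‖) · α_H · √(n d) / (α_NH + β): for all probability vectors p, p', ‖G(p) − G(p')‖ ≤ ((3δ + ‖u0‖) α_H √(n d) / (α_NH + β)) · ‖p − p'‖. -/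
open Finset

set_option maxHeartbeats 1000000

noncomputable section

/-- The interpolation map
`G(p) = (β u0 + ∑_v α_v p_v v) / (β + ∑_v α_v p_v)` on probability vectors `p`. -/
def Gmap {d n : ℕ} (V : Fin n → EuclideanSpace ℝ (Fin d))
    (α : Fin n → ℝ) (β : ℝ) (u0 : EuclideanSpace ℝ (Fin d))
    (p : EuclideanSpace ℝ (Fin n)) : EuclideanSpace ℝ (Fin d) :=
  (β + ∑ v, α v * p v)⁻¹ • (β • u0 + ∑ v, (α v * p v) • V v)

/-- With `‖v‖ ≤ δ` for all items, weights `α_v ∈ [α_NH, α_H]`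
(`0 < α_NH ≤ α_H`) and `β ≥ 0`, the map `G` is Lipschitz on the probability simplex
with constant `(3δ + ‖u0‖) α_H √(nd) / (α_NH + β)` (Euclidean norms). -/
theorem stmt12 {d n : ℕ}
    (V : Fin n → EuclideanSpace ℝ (Fin d))
    (δ : ℝ) (hδ : ∀ v : Fin n, ‖V v‖ ≤ δ)
    (u0 : EuclideanSpace ℝ (Fin d))
    (α : Fin n → ℝ) (αH αNH : ℝ) (hαNH : 0 < αNH) (hαHNH : αNH ≤ αH)
    (hα : ∀ v : Fin n, αNH ≤ α v ∧ α v ≤ αH)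
    (β : ℝ) (hβ : 0 ≤ β) :
    ∀ p p' : EuclideanSpace ℝ (Fin n),
      (∀ v, 0 ≤ p v) → (∀ v, p v ≤ 1) → (∑ v, p v) = 1 →
      (∀ v, 0 ≤ p' v) → (∀ v, p' v ≤ 1) → (∑ v, p' v) = 1 →
      ‖Gmap V α β u0 p - Gmap V α β u0 p'‖
        ≤ (3 * δ + ‖u0‖) * αH * Real.sqrt ((n : ℝ) * (d : ℝ)) / (αNH + β)
            * ‖p - p'‖ := by
  intro p p' hp0 hp1 hps hp'0 hp'1 hp's
  have hn : 0 < n := by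
    rcases Nat.eq_zero_or_pos n with h | h
    · subst h; simp at hps
    · exact h
  have hδ0 : 0 ≤ δ := le_trans (norm_nonneg _) (hδ ⟨0, hn⟩)
  have hαH0 : 0 < αH := lt_of_lt_of_le hαNH hαHNH
  have hden : 0 < αNH + β := by linarith
  rcases Nat.eq_zero_or_pos d with hd | hd
  · subst hd
    have hsub : Subsingleton (EuclideanSpace ℝ (Fin 0)) :=
      ⟨fun a b => by ext i; exact Fin.elim0 i⟩
    have h0 : Gmap V α β u0 p - Gmap V α β u0 p' = 0 := hsub.elim _ _
    rw [h0, norm_zero]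
    have : 0 ≤ (3 * δ + ‖u0‖) * αH * Real.sqrt ((n : ℝ) * (0:ℕ)) / (αNH + β) * ‖p - p'‖ := by
      apply mul_nonneg _ (norm_nonneg _)
      apply div_nonneg _ hden.le
      apply mul_nonneg (mul_nonneg (by positivity) hαH0.le) (Real.sqrt_nonneg _)
    simpa using this
  -- main case
  set S : EuclideanSpace ℝ (Fin n) → ℝ := fun q => β + ∑ v, α v * q v with hSdef
  set N : EuclideanSpace ℝ (Fin n) → EuclideanSpace ℝ (Fin d) :=
    fun q => β • u0 + ∑ v, (α v * q v) • V v with hNdef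
  have hα0 : ∀ v, 0 ≤ α v := fun v => le_trans hαNH.le (hα v).1
  have hSlb : ∀ q : EuclideanSpace ℝ (Fin n), (∀ v, 0 ≤ q v) → (∑ v, q v) = 1 →
      αNH + β ≤ S q := by
    intro q hq hqs
    have h1 : αNH * 1 ≤ ∑ v, α v * q v := by
      rw [← hqs, Finset.mul_sum]
      exact Finset.sum_le_sum fun v _ => mul_le_mul_of_nonneg_right (hα v).1 (hq v)
    simp only [hSdef]; linarith
  have hSp : 0 < S p := lt_of_lt_of_le hden (hSlb p hp0 hps)
  have hSp' : 0 < S p' := lt_of_lt_of_le hden (hSlb p' hp'0 hp's)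
  set T : ℝ := ∑ v, |p v - p' v| with hTdef
  have hT0 : 0 ≤ T := Finset.sum_nonneg fun v _ => abs_nonneg _
  -- |S p - S p'| ≤ αH * T
  have hSdiff : |S p - S p'| ≤ αH * T := by
    have h1 : S p - S p' = ∑ v, α v * (p v - p' v) := by
      simp only [hSdef, mul_sub, Finset.sum_sub_distrib]; ring
    rw [h1, hTdef, Finset.mul_sum]
    refine (Finset.abs_sum_le_sum_abs _ _).trans (Finset.sum_le_sum fun v _ => ?_)
    rw [abs_mul, abs_of_nonneg (hα0 v)]
    exact mul_le_mul_of_nonneg_right (hα v).2 (abs_nonneg _)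
  -- ‖N p - N p'‖ ≤ δ * (αH * T)
  have hNdiff : ‖N p - N p'‖ ≤ δ * (αH * T) := by
    have h2 : N p - N p' = ∑ v, (α v * (p v - p' v)) • V v := by
      simp only [hNdef, mul_sub, sub_smul, Finset.sum_sub_distrib]
      abel
    rw [h2, hTdef, Finset.mul_sum, Finset.mul_sum]
    refine (norm_sum_le _ _).trans (Finset.sum_le_sum fun v _ => ?_)
    rw [norm_smul, Real.norm_eq_abs, abs_mul, abs_of_nonneg (hα0 v)]
    calc α v * |p v - p' v| * ‖V v‖ ≤ αH * |p v - p' v| * δ :=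
          mul_le_mul (mul_le_mul_of_nonneg_right (hα v).2 (abs_nonneg _)) (hδ v)
            (norm_nonneg _) (mul_nonneg hαH0.le (abs_nonneg _))
      _ = δ * (αH * |p v - p' v|) := by ring
  -- ‖Gmap p'‖ ≤ δ + ‖u0‖
  have hGn : ‖Gmap V α β u0 p'‖ ≤ δ + ‖u0‖ := by
    have hNle : ‖N p'‖ ≤ S p' * (δ + ‖u0‖) := by
      have h3 : ‖N p'‖ ≤ β * ‖u0‖ + ∑ v, α v * p' v * δ := by
        refine (norm_add_le _ _).trans ?_
        gcongr
        · rw [norm_smul, Real.norm_eq_abs, abs_of_nonneg hβ]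
        · refine (norm_sum_le _ _).trans (Finset.sum_le_sum fun v _ => ?_)
          rw [norm_smul, Real.norm_eq_abs, abs_of_nonneg (mul_nonneg (hα0 v) (hp'0 v))]
          exact mul_le_mul_of_nonneg_left (hδ v) (mul_nonneg (hα0 v) (hp'0 v))
      have hsum0 : 0 ≤ ∑ v, α v * p' v := Finset.sum_nonneg fun v _ =>
        mul_nonneg (hα0 v) (hp'0 v)
      have h4 : ∑ v, α v * p' v * δ = (∑ v, α v * p' v) * δ := by
        rw [Finset.sum_mul]
      simp only [hSdef]
      nlinarith [norm_nonneg u0]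
    have : ‖Gmap V α β u0 p'‖ = (S p')⁻¹ * ‖N p'‖ := by
      rw [show Gmap V α β u0 p' = (S p')⁻¹ • N p' from rfl, norm_smul,
        Real.norm_eq_abs, abs_of_pos (inv_pos.mpr hSp')]
    rw [this, inv_mul_le_iff₀ hSp']
    exact hNle
  -- decomposition
  have hdecomp : Gmap V α β u0 p - Gmap V α β u0 p'
      = (S p)⁻¹ • (N p - N p') + ((S p' - S p) / S p) • Gmap V α β u0 p' := by
    rw [show Gmap V α β u0 p = (S p)⁻¹ • N p from rfl,
        show Gmap V α β u0 p' = (S p')⁻¹ • N p' from rfl]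
    match_scalars <;> field_simp <;> ring
  have hTle : T ≤ Real.sqrt n * ‖p - p'‖ := by
    have hsq : T ^ 2 ≤ (n : ℝ) * ‖p - p'‖ ^ 2 := by
      have h5 : ‖p - p'‖ ^ 2 = ∑ v, (p v - p' v) ^ 2 := by
        rw [EuclideanSpace.norm_eq, Real.sq_sqrt (Finset.sum_nonneg fun v _ => sq_nonneg _)]
        simp [sq_abs]
      have := sq_sum_le_card_mul_sum_sq (s := Finset.univ) (f := fun v => |p v - p' v|)
      simp only [Finset.card_univ, Fintype.card_fin, sq_abs] at this
      rw [hTdef, h5]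
      exact_mod_cast this
    calc T = Real.sqrt (T ^ 2) := (Real.sqrt_sq hT0).symm
      _ ≤ Real.sqrt ((n : ℝ) * ‖p - p'‖ ^ 2) := Real.sqrt_le_sqrt hsq
      _ = Real.sqrt n * ‖p - p'‖ := by
          rw [Real.sqrt_mul (Nat.cast_nonneg n), Real.sqrt_sq (norm_nonneg _)]
  have hsqrt : Real.sqrt n ≤ Real.sqrt ((n : ℝ) * d) := by
    apply Real.sqrt_le_sqrt
    have h1 : (1:ℝ) ≤ (d:ℝ) := by exact_mod_cast hd
    have h2 : (0:ℝ) ≤ (n:ℝ) := Nat.cast_nonneg n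
    nlinarith
  -- main estimate
  have hmain : ‖Gmap V α β u0 p - Gmap V α β u0 p'‖
      ≤ αH * (2 * δ + ‖u0‖) * T / (αNH + β) := by
    rw [hdecomp]
    refine (norm_add_le _ _).trans ?_
    rw [norm_smul, norm_smul, Real.norm_eq_abs, Real.norm_eq_abs,
      abs_of_pos (inv_pos.mpr hSp), abs_div, abs_of_pos hSp, abs_sub_comm]
    have h6 : (S p)⁻¹ * ‖N p - N p'‖ ≤ (αNH + β)⁻¹ * (δ * (αH * T)) := by
      apply mul_le_mul _ hNdiff (norm_nonneg _) (by positivity)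
      exact inv_anti₀ hden (hSlb p hp0 hps)
    have h7 : |S p - S p'| / S p * ‖Gmap V α β u0 p'‖
        ≤ (αH * T) / (αNH + β) * (δ + ‖u0‖) := by
      apply mul_le_mul _ hGn (norm_nonneg _) (by positivity)
      apply div_le_div₀ (by positivity) hSdiff hden (hSlb p hp0 hps)
    calc (S p)⁻¹ * ‖N p - N p'‖ + |S p - S p'| / S p * ‖Gmap V α β u0 p'‖
        ≤ (αNH + β)⁻¹ * (δ * (αH * T)) + (αH * T) / (αNH + β) * (δ + ‖u0‖) :=
          add_le_add h6 h7
      _ = αH * (2 * δ + ‖u0‖) * T / (αNH + β) := by field_simp; ring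
  refine hmain.trans ?_
  have hpp' : 0 ≤ ‖p - p'‖ := norm_nonneg _
  have h8 : T ≤ Real.sqrt ((n:ℝ) * d) * ‖p - p'‖ :=
    hTle.trans (mul_le_mul_of_nonneg_right hsqrt hpp')
  have hu0 : 0 ≤ ‖u0‖ := norm_nonneg u0
  have hnum : αH * (2 * δ + ‖u0‖) * T
      ≤ (3 * δ + ‖u0‖) * αH * Real.sqrt ((n:ℝ) * d) * ‖p - p'‖ := by
    have hab : αH * (2 * δ + ‖u0‖) ≤ αH * (3 * δ + ‖u0‖) :=
      mul_le_mul_of_nonneg_left (by linarith) hαH0.le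
    have hb : 0 ≤ αH * (3 * δ + ‖u0‖) := mul_nonneg hαH0.le (by linarith)
    calc αH * (2 * δ + ‖u0‖) * T
        ≤ (αH * (3 * δ + ‖u0‖)) * (Real.sqrt ((n:ℝ) * d) * ‖p - p'‖) :=
          mul_le_mul hab h8 hT0 hb
      _ = (3 * δ + ‖u0‖) * αH * Real.sqrt ((n:ℝ) * d) * ‖p - p'‖ := by ring
  rw [div_mul_eq_mul_div, div_le_div_iff₀ hden hden]
  exact mul_le_mul_of_nonneg_right hnum hden.le


end
end

section
/- Let E be a nonempty finite set of vectors in ℝ^d each of Euclidean norm at most δ, let v ∈ E, and let c ≥ 0. Then the function h(u) = exp(⟨v,u⟩) / (Σ_{v'∈E} exp(⟨v',u⟩) + c) satisfies |∂h/∂u_i (u)| ≤ 2δ for every u ∈ ℝ^d and every coordinate i ∈ {1,…,d}. -/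
set_option maxHeartbeats 1000000


open Finset
open scoped RealInnerProductSpace

/-- For a nonempty finite set `E` of vectors in `ℝ^d` of Euclidean norm at
most `δ`, an item `v ∈ E` and a constant `c ≥ 0`, every partial derivative of
`h(u) = exp(⟨v,u⟩) / (∑_{v'∈E} exp(⟨v',u⟩) + c)` is bounded in absolute value by `2δ`. -/
theorem stmt13 {d : ℕ} (E : Finset (EuclideanSpace ℝ (Fin d))) (hE : E.Nonempty)
    (δ : ℝ) (hδ : ∀ v' ∈ E, ‖v'‖ ≤ δ)
    (v : EuclideanSpace ℝ (Fin d)) (hv : v ∈ E)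
    (c : ℝ) (hc : 0 ≤ c)
    (u : EuclideanSpace ℝ (Fin d)) (i : Fin d) :
    |fderiv ℝ
        (fun u : EuclideanSpace ℝ (Fin d) =>
          Real.exp ⟪v, u⟫ / ((∑ v' ∈ E, Real.exp ⟪v', u⟫) + c)) u
        (EuclideanSpace.single i (1:ℝ))| ≤ 2 * δ := by
  classical
  set e : EuclideanSpace ℝ (Fin d) := EuclideanSpace.single i (1:ℝ) with he
  set g : ℝ := (∑ v' ∈ E, Real.exp ⟪v', u⟫) + c with hg
  have hS_pos : 0 < ∑ v' ∈ E, Real.exp ⟪v', u⟫ :=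
    Finset.sum_pos (fun v' _ => Real.exp_pos _) hE
  have hg_pos : 0 < g := by positivity
  have hg0 : g ≠ 0 := ne_of_gt hg_pos
  -- derivative of the numerator
  have hf : HasFDerivAt (fun u : EuclideanSpace ℝ (Fin d) => Real.exp ⟪v, u⟫)
      (Real.exp ⟪v, u⟫ • (innerSL ℝ v)) u :=
    ((innerSL ℝ v).hasFDerivAt).exp
  -- derivative of the denominator
  have hgder : HasFDerivAt
      (fun u : EuclideanSpace ℝ (Fin d) => (∑ v' ∈ E, Real.exp ⟪v', u⟫) + c)
      (∑ v' ∈ E, Real.exp ⟪v', u⟫ • (innerSL ℝ v')) u := by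
    have : HasFDerivAt (fun u : EuclideanSpace ℝ (Fin d) => ∑ v' ∈ E, Real.exp ⟪v', u⟫)
        (∑ v' ∈ E, Real.exp ⟪v', u⟫ • (innerSL ℝ v')) u :=
      HasFDerivAt.fun_sum (fun v' _ => ((innerSL ℝ v').hasFDerivAt).exp)
    simpa using this.add_const c
  -- derivative of the inverse of the denominator
  have hinv : HasFDerivAt
      (fun u : EuclideanSpace ℝ (Fin d) => ((∑ v' ∈ E, Real.exp ⟪v', u⟫) + c)⁻¹)
      ((-(ContinuousLinearMap.mulLeftRight ℝ ℝ g⁻¹ g⁻¹)).comp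
        (∑ v' ∈ E, Real.exp ⟪v', u⟫ • (innerSL ℝ v'))) u :=
    (hasFDerivAt_inv' (𝕜 := ℝ) hg0).comp u hgder
  have hmul : HasFDerivAt
      (fun u : EuclideanSpace ℝ (Fin d) =>
        Real.exp ⟪v, u⟫ * ((∑ v' ∈ E, Real.exp ⟪v', u⟫) + c)⁻¹)
      (Real.exp ⟪v, u⟫ • ((-(ContinuousLinearMap.mulLeftRight ℝ ℝ g⁻¹ g⁻¹)).comp
          (∑ v' ∈ E, Real.exp ⟪v', u⟫ • (innerSL ℝ v'))) +
        (Real.exp ⟪v, u⟫ • (innerSL ℝ v)).smulRight g⁻¹) u :=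
    hf.mul' hinv
  have hfun : (fun u : EuclideanSpace ℝ (Fin d) =>
      Real.exp ⟪v, u⟫ / ((∑ v' ∈ E, Real.exp ⟪v', u⟫) + c)) =
      (fun u : EuclideanSpace ℝ (Fin d) =>
        Real.exp ⟪v, u⟫ * ((∑ v' ∈ E, Real.exp ⟪v', u⟫) + c)⁻¹) := by
    funext x; rw [div_eq_mul_inv]
  rw [hfun, hmul.fderiv]
  -- evaluate the derivative at `e`
  have hval : (Real.exp ⟪v, u⟫ • ((-(ContinuousLinearMap.mulLeftRight ℝ ℝ g⁻¹ g⁻¹)).comp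
          (∑ v' ∈ E, Real.exp ⟪v', u⟫ • (innerSL ℝ v'))) +
        (Real.exp ⟪v, u⟫ • (innerSL ℝ v)).smulRight g⁻¹) e =
      -(Real.exp ⟪v, u⟫ * (g⁻¹ * (∑ v' ∈ E, Real.exp ⟪v', u⟫ * ⟪v', e⟫) * g⁻¹)) +
        Real.exp ⟪v, u⟫ * ⟪v, e⟫ * g⁻¹ := by
    simp only [ContinuousLinearMap.add_apply, ContinuousLinearMap.coe_smul',
      Pi.smul_apply, ContinuousLinearMap.coe_comp', Function.comp_apply,
      ContinuousLinearMap.neg_apply, ContinuousLinearMap.mulLeftRight_apply,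
      ContinuousLinearMap.smulRight_apply, ContinuousLinearMap.sum_apply,
      innerSL_apply_apply, smul_eq_mul]
    rw [Finset.mul_sum, Finset.sum_mul]
    ring_nf
  rw [hval]
  -- bounds
  have hδ0 : 0 ≤ δ := le_trans (norm_nonneg v) (hδ v hv)
  have hne : ‖e‖ = 1 := by
    rw [he, EuclideanSpace.norm_single, norm_one]
  have hinner : ∀ v' ∈ E, |⟪v', e⟫| ≤ δ := by
    intro v' hv'
    calc |⟪v', e⟫| ≤ ‖v'‖ * ‖e‖ := abs_real_inner_le_norm v' e
    _ ≤ δ * 1 := by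
        apply mul_le_mul (hδ v' hv') (le_of_eq hne) (norm_nonneg e) hδ0
    _ = δ := mul_one δ
  have hfg : Real.exp ⟪v, u⟫ ≤ g := by
    calc Real.exp ⟪v, u⟫ ≤ ∑ v' ∈ E, Real.exp ⟪v', u⟫ :=
      Finset.single_le_sum (f := fun v' => Real.exp ⟪v', u⟫) (fun v' _ => (Real.exp_pos _).le) hv
    _ ≤ g := by rw [hg]; linarith
  have hsum_bound : |∑ v' ∈ E, Real.exp ⟪v', u⟫ * ⟪v', e⟫| ≤ δ * g := by
    calc |∑ v' ∈ E, Real.exp ⟪v', u⟫ * ⟪v', e⟫|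
        ≤ ∑ v' ∈ E, |Real.exp ⟪v', u⟫ * ⟪v', e⟫| := Finset.abs_sum_le_sum_abs _ _
      _ ≤ ∑ v' ∈ E, Real.exp ⟪v', u⟫ * δ := by
          apply Finset.sum_le_sum
          intro v' hv'
          rw [abs_mul, abs_of_pos (Real.exp_pos _)]
          exact mul_le_mul_of_nonneg_left (hinner v' hv') (Real.exp_pos _).le
      _ = (∑ v' ∈ E, Real.exp ⟪v', u⟫) * δ := by rw [Finset.sum_mul]
      _ ≤ g * δ := by
          apply mul_le_mul_of_nonneg_right _ hδ0
          rw [hg]; linarith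
      _ = δ * g := mul_comm _ _
  have hexp_pos := Real.exp_pos ⟪v, u⟫
  have hratio : Real.exp ⟪v, u⟫ * g⁻¹ ≤ 1 := by
    rw [← div_eq_mul_inv, div_le_one hg_pos]; exact hfg
  have hterm1 : |Real.exp ⟪v, u⟫ * (g⁻¹ * (∑ v' ∈ E, Real.exp ⟪v', u⟫ * ⟪v', e⟫) * g⁻¹)| ≤ δ := by
    rw [abs_mul, abs_mul, abs_mul, abs_of_pos hexp_pos,
      abs_of_pos (inv_pos.mpr hg_pos)]
    calc Real.exp ⟪v, u⟫ * (g⁻¹ * |∑ v' ∈ E, Real.exp ⟪v', u⟫ * ⟪v', e⟫| * g⁻¹)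
        ≤ Real.exp ⟪v, u⟫ * (g⁻¹ * (δ * g) * g⁻¹) := by
          apply mul_le_mul_of_nonneg_left _ hexp_pos.le
          apply mul_le_mul_of_nonneg_right _ (inv_pos.mpr hg_pos).le
          exact mul_le_mul_of_nonneg_left hsum_bound (inv_pos.mpr hg_pos).le
      _ = Real.exp ⟪v, u⟫ * g⁻¹ * δ := by field_simp
      _ ≤ 1 * δ := mul_le_mul_of_nonneg_right hratio hδ0
      _ = δ := one_mul δ
  have hterm2 : |Real.exp ⟪v, u⟫ * ⟪v, e⟫ * g⁻¹| ≤ δ := by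
    rw [abs_mul, abs_mul, abs_of_pos hexp_pos, abs_of_pos (inv_pos.mpr hg_pos)]
    calc Real.exp ⟪v, u⟫ * |⟪v, e⟫| * g⁻¹
        ≤ Real.exp ⟪v, u⟫ * δ * g⁻¹ := by
          apply mul_le_mul_of_nonneg_right _ (inv_pos.mpr hg_pos).le
          exact mul_le_mul_of_nonneg_left (hinner v hv) hexp_pos.le
      _ = Real.exp ⟪v, u⟫ * g⁻¹ * δ := by ring
      _ ≤ 1 * δ := mul_le_mul_of_nonneg_right hratio hδ0
      _ = δ := one_mul δ
  calc |-(Real.exp ⟪v, u⟫ * (g⁻¹ * (∑ v' ∈ E, Real.exp ⟪v', u⟫ * ⟪v', e⟫) * g⁻¹)) +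
        Real.exp ⟪v, u⟫ * ⟪v, e⟫ * g⁻¹|
      ≤ |-(Real.exp ⟪v, u⟫ * (g⁻¹ * (∑ v' ∈ E, Real.exp ⟪v', u⟫ * ⟪v', e⟫) * g⁻¹))| +
        |Real.exp ⟪v, u⟫ * ⟪v, e⟫ * g⁻¹| := abs_add_le _ _
    _ ≤ δ + δ := by rw [abs_neg]; exact add_le_add hterm1 hterm2
    _ = 2 * δ := by ring
end

section
/- Let Ω be a nonempty finite set of vectors in ℝ^d each of Euclidean norm at most δ, let E ⊆ Ω be nonempty, let v ∈ Ω, and let c ≥ 0. Then the function h(u) = c · exp(⟨v,u⟩) / ((Σ_{v'∈E} exp(⟨v',u⟩) + c) · Σ_{v'∈Ω} exp(⟨v',u⟩)) satisfies |∂h/∂u_i (u)| ≤ 3δ for every u ∈ ℝ^d and every coordinate i ∈ {1,…,d}. -/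
open Finset
open scoped RealInnerProductSpace

/-- For a nonempty finite set `Ω` of vectors in `ℝ^d` of Euclidean norm at
most `δ`, a nonempty subset `E ⊆ Ω`, an item `v ∈ Ω` and a constant `c ≥ 0`, every
partial derivative of
`h(u) = c exp(⟨v,u⟩) / ((∑_{v'∈E} exp(⟨v',u⟩) + c) ∑_{v'∈Ω} exp(⟨v',u⟩))` is bounded in
absolute value by `3δ`. -/
theorem stmt14 {d : ℕ} (Ω : Finset (EuclideanSpace ℝ (Fin d))) (hΩ : Ω.Nonempty)
    (δ : ℝ) (hδ : ∀ v' ∈ Ω, ‖v'‖ ≤ δ)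
    (E : Finset (EuclideanSpace ℝ (Fin d))) (hEsub : E ⊆ Ω) (hE : E.Nonempty)
    (v : EuclideanSpace ℝ (Fin d)) (hv : v ∈ Ω)
    (c : ℝ) (hc : 0 ≤ c)
    (u : EuclideanSpace ℝ (Fin d)) (i : Fin d) :
    |fderiv ℝ
        (fun u : EuclideanSpace ℝ (Fin d) =>
          c * Real.exp ⟪v, u⟫ /
            (((∑ v' ∈ E, Real.exp ⟪v', u⟫) + c) * (∑ v' ∈ Ω, Real.exp ⟪v', u⟫))) u
        (EuclideanSpace.single i (1:ℝ))| ≤ 3 * δ := by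
  have hexp : ∀ w : EuclideanSpace ℝ (Fin d), HasFDerivAt
      (fun u : EuclideanSpace ℝ (Fin d) => Real.exp ⟪w, u⟫)
      (Real.exp ⟪w, u⟫ • innerSL ℝ w) u :=
    fun w => (Real.hasDerivAt_exp ⟪w, u⟫).comp_hasFDerivAt u (innerSL ℝ w).hasFDerivAt
  have hN : HasFDerivAt (fun u : EuclideanSpace ℝ (Fin d) => c * Real.exp ⟪v, u⟫)
      (c • (Real.exp ⟪v, u⟫ • innerSL ℝ v)) u := (hexp v).const_mul c
  have hAd : HasFDerivAt (fun u : EuclideanSpace ℝ (Fin d) => (∑ v' ∈ E, Real.exp ⟪v', u⟫) + c)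
      (∑ v' ∈ E, Real.exp ⟪v', u⟫ • innerSL ℝ v') u :=
    (HasFDerivAt.fun_sum fun w _ => hexp w).add_const c
  have hBd : HasFDerivAt (fun u : EuclideanSpace ℝ (Fin d) => ∑ v' ∈ Ω, Real.exp ⟪v', u⟫)
      (∑ v' ∈ Ω, Real.exp ⟪v', u⟫ • innerSL ℝ v') u :=
    HasFDerivAt.fun_sum fun w _ => hexp w
  have hD := hAd.fun_mul hBd
  have hSE : 0 < ∑ v' ∈ E, Real.exp ⟪v', u⟫ := Finset.sum_pos (fun _ _ => Real.exp_pos _) hE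
  have hBpos : 0 < ∑ v' ∈ Ω, Real.exp ⟪v', u⟫ := Finset.sum_pos (fun _ _ => Real.exp_pos _) hΩ
  have hApos : 0 < (∑ v' ∈ E, Real.exp ⟪v', u⟫) + c := by linarith
  have hne : ((∑ v' ∈ E, Real.exp ⟪v', u⟫) + c) * (∑ v' ∈ Ω, Real.exp ⟪v', u⟫) ≠ 0 :=
    (mul_pos hApos hBpos).ne'
  have hInv := (hasDerivAt_inv hne).comp_hasFDerivAt u hD
  have hh := hN.fun_mul hInv
  have hgoal : (fun u : EuclideanSpace ℝ (Fin d) =>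
          c * Real.exp ⟪v, u⟫ /
            (((∑ v' ∈ E, Real.exp ⟪v', u⟫) + c) * (∑ v' ∈ Ω, Real.exp ⟪v', u⟫)))
      = fun u : EuclideanSpace ℝ (Fin d) =>
          (c * Real.exp ⟪v, u⟫) *
            ((((∑ v' ∈ E, Real.exp ⟪v', u⟫) + c) * (∑ v' ∈ Ω, Real.exp ⟪v', u⟫))⁻¹) := by
    funext y; rw [div_eq_mul_inv]
  simp only [Function.comp_def] at hh
  rw [hgoal, hh.fderiv]
  simp only [ContinuousLinearMap.add_apply, ContinuousLinearMap.smul_apply,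
    ContinuousLinearMap.coe_sum', Finset.sum_apply, innerSL_apply_apply,
    EuclideanSpace.inner_single_right, RCLike.conj_to_real, smul_eq_mul, mul_one,
    starRingEnd_apply, star_trivial]
  simp only [one_mul]
  set S := ∑ v' ∈ E, Real.exp ⟪v', u⟫ with hS
  set B := ∑ v' ∈ Ω, Real.exp ⟪v', u⟫ with hB2
  set a := ∑ x ∈ E, Real.exp ⟪x, u⟫ * x i with ha'
  set b := ∑ x ∈ Ω, Real.exp ⟪x, u⟫ * x i with hb'
  set N := c * Real.exp ⟪v, u⟫ with hN'
  set P := (S + c) * B with hP'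
  have hP : 0 < P := mul_pos hApos hBpos
  have hN0 : 0 ≤ N := mul_nonneg hc (Real.exp_pos _).le
  have hNP : N ≤ P := by
    have h1 : Real.exp ⟪v, u⟫ ≤ B := Finset.single_le_sum (fun w _ => (Real.exp_pos ⟪w, u⟫).le) hv
    have h2 : c ≤ S + c := by linarith
    exact mul_le_mul h2 h1 (Real.exp_pos _).le hApos.le
  have hvi : ∀ w ∈ Ω, |w i| ≤ δ := by
    intro w hw
    have h := abs_real_inner_le_norm w (EuclideanSpace.single i (1 : ℝ))
    rw [EuclideanSpace.inner_single_right] at h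
    simp only [one_mul, RCLike.conj_to_real, EuclideanSpace.norm_single, norm_one, mul_one] at h
    exact h.trans (hδ w hw)
  have hδ0 : 0 ≤ δ := (abs_nonneg _).trans (hvi v hv)
  have hsumbound : ∀ (F : Finset (EuclideanSpace ℝ (Fin d))), F ⊆ Ω →
      |∑ x ∈ F, Real.exp ⟪x, u⟫ * x i| ≤ δ * ∑ x ∈ F, Real.exp ⟪x, u⟫ := by
    intro F hF
    calc |∑ x ∈ F, Real.exp ⟪x, u⟫ * x i| ≤ ∑ x ∈ F, |Real.exp ⟪x, u⟫ * x i| :=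
          Finset.abs_sum_le_sum_abs _ _
      _ ≤ ∑ x ∈ F, Real.exp ⟪x, u⟫ * δ := by
          refine Finset.sum_le_sum fun x hx => ?_
          rw [abs_mul, abs_of_pos (Real.exp_pos _)]
          exact mul_le_mul_of_nonneg_left (hvi x (hF hx)) (Real.exp_pos _).le
      _ = δ * ∑ x ∈ F, Real.exp ⟪x, u⟫ := by rw [← Finset.sum_mul, mul_comm]
  have hA : |a| ≤ δ * (S + c) := by
    refine (hsumbound E hEsub).trans ?_
    have : δ * S ≤ δ * (S + c) := by nlinarith
    exact this
  have hBB : |b| ≤ δ * B := hsumbound Ω (le_refl Ω)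
  clear_value S B a b N P
  have key1 : |N * (-(P ^ 2)⁻¹ * ((S + c) * b + B * a))| ≤ 2 * δ := by
    rw [abs_mul, abs_mul (-(P ^ 2)⁻¹) ((S + c) * b + B * a), abs_neg, abs_inv,
      abs_of_nonneg hN0, abs_of_nonneg (sq_nonneg P)]
    have hmid : |(S + c) * b + B * a| ≤ 2 * δ * P := by
      calc |(S + c) * b + B * a| ≤ |(S + c) * b| + |B * a| := abs_add_le _ _
        _ = (S + c) * |b| + B * |a| := by
            rw [abs_mul, abs_mul, abs_of_pos hApos, abs_of_pos hBpos]
        _ ≤ (S + c) * (δ * B) + B * (δ * (S + c)) := by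
            have := mul_le_mul_of_nonneg_left hBB hApos.le
            have := mul_le_mul_of_nonneg_left hA hBpos.le
            linarith
        _ = 2 * δ * P := by rw [hP']; ring
    calc N * ((P ^ 2)⁻¹ * |(S + c) * b + B * a|) ≤ P * ((P ^ 2)⁻¹ * (2 * δ * P)) := by
          have h1 : (P ^ 2)⁻¹ * |(S + c) * b + B * a| ≤ (P ^ 2)⁻¹ * (2 * δ * P) :=
            mul_le_mul_of_nonneg_left hmid (by positivity)
          exact mul_le_mul hNP h1 (by positivity) hP.le
      _ = 2 * δ := by
          have hPne : P ≠ 0 := hP.ne'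
          field_simp
  have key2 : |P⁻¹ * (c * (Real.exp ⟪v, u⟫ * v i))| ≤ δ := by
    rw [show c * (Real.exp ⟪v, u⟫ * v i) = N * v i by rw [hN']; ring]
    rw [abs_mul, abs_mul N (v i), abs_inv, abs_of_pos hP, abs_of_nonneg hN0]
    calc P⁻¹ * (N * |v i|) ≤ P⁻¹ * (P * δ) := by
          have h1 : N * |v i| ≤ P * δ := mul_le_mul hNP (hvi v hv) (abs_nonneg _) hP.le
          exact mul_le_mul_of_nonneg_left h1 (by positivity)
      _ = δ := by
          have hPne : P ≠ 0 := hP.ne'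
          field_simp
  calc |N * (-(P ^ 2)⁻¹ * ((S + c) * b + B * a)) + P⁻¹ * (c * (Real.exp ⟪v, u⟫ * v i))|
      ≤ |N * (-(P ^ 2)⁻¹ * ((S + c) * b + B * a))| + |P⁻¹ * (c * (Real.exp ⟪v, u⟫ * v i))| := abs_add_le _ _
    _ ≤ 2 * δ + δ := add_le_add key1 key2
    _ = 3 * δ := by ring
end

section
/- Suppose ‖v‖ ≤ δ for all v ∈ Ω. Then for every recommendation policy π, every item v ∈ Ω, and every coordinate i ∈ {1,…,d}, the selection probability satisfies |∂p_v(π,u)/∂u_i| ≤ 5δ; consequently the map u ↦ (p_v(π,u))_{v∈Ω} from ℝ^d to ℝ^n is Lipschitz with constant 5δ√(n d), uniformly over policies: ‖p(π,u) − p(π,u')‖ ≤ 5δ√(n d)·‖u − u'‖ for all u, u' ∈ ℝ^d (Euclidean norms). -/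
open Finset
open scoped RealInnerProductSpace

noncomputable section

/-- User/item profile space: `ℝ^d` with the Euclidean norm. -/
abbrev Vec (d : ℕ) := EuclideanSpace ℝ (Fin d)

/-- MNL score of item `v` under user profile `u`: `s_v(u) = exp(⟨v,u⟩)`. -/
def score {d : ℕ} {ι : Type} (V : ι → Vec d) (u : Vec d) (v : ι) : ℝ :=
  Real.exp ⟪V v, u⟫

/-- Total score of a set of items: `s_A(u) = ∑_{v∈A} s_v(u)`. -/
def sSet {d : ℕ} {ι : Type} (V : ι → Vec d) (u : Vec d) (A : Finset ι) : ℝ :=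
  ∑ v ∈ A, score V u v

/-- MNL click function `g(x) = x/(x+c)`. -/
def gfun (c x : ℝ) : ℝ := x / (x + c)

/-- Probability that the user selects item `v`, conditional on recommended set `E`. -/
def pvE {d : ℕ} {ι : Type} [Fintype ι] [DecidableEq ι]
    (V : ι → Vec d) (c : ℝ) (u : Vec d) (E : Finset ι) (v : ι) : ℝ :=
  if E = ∅ then score V u v / sSet V u Finset.univ
  else if v ∈ E then
    score V u v / sSet V u E * gfun c (sSet V u E)
      + score V u v / sSet V u Finset.univ * (1 - gfun c (sSet V u E))
  else score V u v / sSet V u Finset.univ * (1 - gfun c (sSet V u E))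

/-- Unconditional probability that the user selects item `v` under policy `π`:
`p_v(π,u) = ∑_{C∈𝒞} p_C ∑_{E⊆C} p_{E|C} p_{v|E}(u)`. -/
def pv {d : ℕ} {ι : Type} [Fintype ι] [DecidableEq ι]
    (V : ι → Vec d) (c : ℝ) (cand : Finset (Finset ι)) (pC : Finset ι → ℝ)
    (π : Finset ι → Finset ι → ℝ) (u : Vec d) (v : ι) : ℝ :=
  ∑ C ∈ cand, pC C * (∑ E ∈ C.powerset, π C E * pvE V c u E v)

/-- The fixed-point map
`F(π,u) = (β u0 + ∑_v α_v p_v(π,u) v) / (β + ∑_v α_v p_v(π,u))`. -/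
def Fmap {d : ℕ} {ι : Type} [Fintype ι] [DecidableEq ι]
    (V : ι → Vec d) (c : ℝ) (cand : Finset (Finset ι)) (pC : Finset ι → ℝ)
    (α : ι → ℝ) (β : ℝ) (u0 : Vec d)
    (π : Finset ι → Finset ι → ℝ) (u : Vec d) : Vec d :=
  (β + ∑ v, α v * pv V c cand pC π u v)⁻¹ •
    (β • u0 + ∑ v, (α v * pv V c cand pC π u v) • V v)

/-- A recommendation policy: for each candidate set `C ∈ 𝒞`, a probability
distribution over subsets `E ⊆ C`. -/
def ValidPolicy {ι : Type} [DecidableEq ι] (cand : Finset (Finset ι))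
    (π : Finset ι → Finset ι → ℝ) : Prop :=
  ∀ C ∈ cand, (∀ E ∈ C.powerset, 0 ≤ π C E) ∧ (∑ E ∈ C.powerset, π C E) = 1

namespace Stmt15Aux
set_option linter.unusedSectionVars false
variable {d : ℕ} {ι : Type} [Fintype ι] [DecidableEq ι]
def Dscore (V : ι → Vec d) (u : Vec d) (v : ι) : Vec d →L[ℝ] ℝ :=
  score V u v • innerSL ℝ (V v)
lemma hasFDerivAt_score (V : ι → Vec d) (u : Vec d) (v : ι) :
    HasFDerivAt (fun u => score V u v) (Dscore V u v) u := by
  simpa [score, Dscore] using ((innerSL ℝ (V v)).hasFDerivAt (x := u)).exp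
def DsSet (V : ι → Vec d) (u : Vec d) (A : Finset ι) : Vec d →L[ℝ] ℝ :=
  ∑ v ∈ A, Dscore V u v
lemma hasFDerivAt_sSet (V : ι → Vec d) (u : Vec d) (A : Finset ι) :
    HasFDerivAt (fun u => sSet V u A) (DsSet V u A) u := by
  simpa [sSet, DsSet] using HasFDerivAt.fun_sum (fun v _ => hasFDerivAt_score V u v)
lemma score_pos (V : ι → Vec d) (u : Vec d) (v : ι) : 0 < score V u v := Real.exp_pos _
lemma sSet_pos (V : ι → Vec d) (u : Vec d) {A : Finset ι} (hA : A.Nonempty) :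
    0 < sSet V u A := Finset.sum_pos (fun v _ => score_pos V u v) hA
lemma score_le_sSet (V : ι → Vec d) (u : Vec d) {A : Finset ι} {v : ι} (hv : v ∈ A) :
    score V u v ≤ sSet V u A :=
  Finset.single_le_sum (fun w _ => (score_pos V u w).le) hv
variable {δ : ℝ}
lemma abs_Dscore_le (V : ι → Vec d) (u : Vec d) (hδ : ∀ v, ‖V v‖ ≤ δ) (v : ι) (w : Vec d) :
    |Dscore V u v w| ≤ score V u v * (δ * ‖w‖) := by
  have h1 : |(⟪V v, w⟫ : ℝ)| ≤ ‖V v‖ * ‖w‖ := abs_real_inner_le_norm (V v) w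
  have h2 : ‖V v‖ * ‖w‖ ≤ δ * ‖w‖ := mul_le_mul_of_nonneg_right (hδ v) (norm_nonneg w)
  have : Dscore V u v w = score V u v * ⟪V v, w⟫ := by simp [Dscore]
  rw [this, abs_mul, abs_of_pos (score_pos V u v)]
  exact mul_le_mul_of_nonneg_left (h1.trans h2) (score_pos V u v).le
lemma abs_DsSet_le (V : ι → Vec d) (u : Vec d) (hδ : ∀ v, ‖V v‖ ≤ δ) (A : Finset ι) (w : Vec d) :
    |DsSet V u A w| ≤ sSet V u A * (δ * ‖w‖) := by
  have : DsSet V u A w = ∑ v ∈ A, Dscore V u v w := by simp [DsSet]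
  rw [this, sSet, Finset.sum_mul]
  exact (Finset.abs_sum_le_sum_abs _ _).trans
    (Finset.sum_le_sum fun v _ => abs_Dscore_le V u hδ v w)

lemma ratio_hasFDerivAt (V : ι → Vec d) (u : Vec d) (hδ : ∀ v, ‖V v‖ ≤ δ)
    {A : Finset ι} (hA : A.Nonempty) {v : ι} (hv : v ∈ A) :
    ∃ D : Vec d →L[ℝ] ℝ,
      HasFDerivAt (fun u => score V u v / sSet V u A) D u ∧
      ∀ w, |D w| ≤ 2 * δ * ‖w‖ := by
  have hδ0 : 0 ≤ δ := (norm_nonneg (V v)).trans (hδ v)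
  have hs : 0 < sSet V u A := sSet_pos V u hA
  have hinv : HasFDerivAt (fun u => (sSet V u A)⁻¹)
      ((-((sSet V u A) ^ 2)⁻¹) • DsSet V u A) u :=
    (hasDerivAt_inv hs.ne').comp_hasFDerivAt u (hasFDerivAt_sSet V u A)
  have hD : HasFDerivAt (fun u => score V u v / sSet V u A)
      (score V u v • ((-((sSet V u A) ^ 2)⁻¹) • DsSet V u A)
        + (sSet V u A)⁻¹ • Dscore V u v) u := by
    simpa [div_eq_mul_inv] using (hasFDerivAt_score V u v).fun_mul hinv
  refine ⟨_, hD, fun w => ?_⟩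
  set s := sSet V u A with hsdef
  set p := score V u v with hpdef
  set a := DsSet V u A w
  set b := Dscore V u v w
  set K := δ * ‖w‖ with hK
  have hK0 : 0 ≤ K := by positivity
  have h1 : |b| ≤ p * K := abs_Dscore_le V u hδ v w
  have h2 : |a| ≤ s * K := abs_DsSet_le V u hδ A w
  have hvle : p ≤ s := score_le_sSet V u hv
  have hp : 0 < p := score_pos V u v
  have happ : (p • ((-(s ^ 2)⁻¹) • DsSet V u A) + s⁻¹ • Dscore V u v) w
      = p * ((-(s ^ 2)⁻¹) * a) + s⁻¹ * b := by
    simp [ContinuousLinearMap.add_apply, ContinuousLinearMap.smul_apply, mul_assoc]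
    rfl
  rw [happ]
  have hA1 : |p * ((-(s ^ 2)⁻¹) * a)| ≤ K := by
    have he : p * ((-(s ^ 2)⁻¹) * a) = -(p / s * (a / s)) := by
      ring
    rw [he, abs_neg, abs_mul]
    have hq1 : |p / s| ≤ 1 := by
      rw [abs_of_pos (by positivity)]; exact (div_le_one hs).2 hvle
    have hq2 : |a / s| ≤ K := by
      rw [abs_div, abs_of_pos hs, div_le_iff₀ hs]
      linarith [h2]
    calc |p / s| * |a / s| ≤ 1 * K :=
          mul_le_mul hq1 hq2 (abs_nonneg _) zero_le_one
      _ = K := one_mul K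
  have hB1 : |s⁻¹ * b| ≤ K := by
    rw [abs_mul, abs_inv, abs_of_pos hs]
    have : s⁻¹ * |b| ≤ s⁻¹ * (s * K) :=
      mul_le_mul_of_nonneg_left (h1.trans (mul_le_mul_of_nonneg_right hvle hK0))
        (by positivity)
    rw [inv_mul_cancel_left₀ hs.ne'] at this
    exact this
  calc |p * ((-(s ^ 2)⁻¹) * a) + s⁻¹ * b| ≤ _ + _ := abs_add_le _ _
    _ ≤ K + K := add_le_add hA1 hB1
    _ = 2 * δ * ‖w‖ := by rw [hK]; ring

lemma g_hasFDerivAt (V : ι → Vec d) (u : Vec d) (hδ : ∀ v, ‖V v‖ ≤ δ) (hδ0 : 0 ≤ δ)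
    {c : ℝ} (hc : 0 < c) {E : Finset ι} (hE : E.Nonempty) :
    ∃ G : Vec d →L[ℝ] ℝ,
      HasFDerivAt (fun u => gfun c (sSet V u E)) G u ∧
      ∀ w, |G w| ≤ δ * ‖w‖ := by
  have hs : 0 < sSet V u E := sSet_pos V u hE
  have hne : sSet V u E + c ≠ 0 := by positivity
  have hg : HasDerivAt (fun x : ℝ => gfun c x)
      ((1 * (sSet V u E + c) - sSet V u E * 1) / (sSet V u E + c) ^ 2) (sSet V u E) := by
    simpa [gfun] using (hasDerivAt_id (sSet V u E)).fun_div
      ((hasDerivAt_id (sSet V u E)).add_const c) hne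
  have hG := hg.comp_hasFDerivAt u (hasFDerivAt_sSet V u E)
  refine ⟨_, hG, fun w => ?_⟩
  set s := sSet V u E with hsdef
  set a := DsSet V u E w
  have h2 : |a| ≤ s * (δ * ‖w‖) := abs_DsSet_le V u hδ E w
  have happ : (((1 * (s + c) - s * 1) / (s + c) ^ 2) • DsSet V u E) w
      = (c / (s + c) ^ 2) * a := by
    have h0 : (1 * (s + c) - s * 1) / (s + c) ^ 2 = c / (s + c) ^ 2 := by ring
    simp only [ContinuousLinearMap.smul_apply, smul_eq_mul, h0]
    rfl
  rw [happ, abs_mul, abs_of_pos (by positivity : (0:ℝ) < c / (s + c) ^ 2)]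
  have key : c / (s + c) ^ 2 * (s * (δ * ‖w‖)) ≤ δ * ‖w‖ := by
    rw [div_mul_eq_mul_div, div_le_iff₀ (by positivity : (0:ℝ) < (s + c) ^ 2)]
    have h1 : c * s ≤ (s + c) ^ 2 := by nlinarith
    have h3 : 0 ≤ δ * ‖w‖ := by positivity
    nlinarith
  exact le_trans (mul_le_mul_of_nonneg_left h2 (by positivity)) key

lemma g_mem (V : ι → Vec d) (u : Vec d) {c : ℝ} (hc : 0 < c) (E : Finset ι) :
    0 ≤ gfun c (sSet V u E) ∧ gfun c (sSet V u E) ≤ 1 := by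
  have hs : 0 ≤ sSet V u E := Finset.sum_nonneg fun v _ => (score_pos V u v).le
  constructor
  · exact div_nonneg hs (by positivity)
  · rw [gfun, div_le_one (by positivity)]; linarith

lemma ratio_mem (V : ι → Vec d) (u : Vec d) {A : Finset ι} {v : ι} (hv : v ∈ A) :
    0 ≤ score V u v / sSet V u A ∧ score V u v / sSet V u A ≤ 1 := by
  have hs : 0 < sSet V u A := sSet_pos V u ⟨v, hv⟩
  exact ⟨div_nonneg (score_pos V u v).le hs.le,
    (div_le_one hs).2 (score_le_sSet V u hv)⟩


lemma pvE_hasFDerivAt [Nonempty ι] (V : ι → Vec d) (hδ : ∀ v, ‖V v‖ ≤ δ)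
    {c : ℝ} (hc : 0 < c) (E : Finset ι) (v : ι) (u : Vec d) :
    ∃ D : Vec d →L[ℝ] ℝ,
      HasFDerivAt (fun u => pvE V c u E v) D u ∧ ∀ w, |D w| ≤ 5 * δ * ‖w‖ := by
  have hδ0 : 0 ≤ δ := (norm_nonneg (V v)).trans (hδ v)
  have huniv : (Finset.univ : Finset ι).Nonempty := Finset.univ_nonempty
  obtain ⟨DΩ, hDΩ, hbΩ⟩ := ratio_hasFDerivAt V u hδ huniv (Finset.mem_univ v)
  by_cases hE : E = ∅
  · refine ⟨DΩ, ?_, fun w => ?_⟩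
    · simpa only [pvE, if_pos hE] using hDΩ
    · have := hbΩ w
      have : (0:ℝ) ≤ δ * ‖w‖ := by positivity
      linarith [hbΩ w]
  · have hEne : E.Nonempty := Finset.nonempty_iff_ne_empty.2 hE
    obtain ⟨G, hG, hbG⟩ := g_hasFDerivAt V u hδ hδ0 hc hEne
    have hone : HasFDerivAt (fun u => 1 - gfun c (sSet V u E)) (-G) u := hG.const_sub 1
    obtain ⟨hg0, hg1⟩ := g_mem V u hc E
    obtain ⟨hrΩ0, hrΩ1⟩ := ratio_mem V u (Finset.mem_univ v)
    by_cases hv : v ∈ E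
    · obtain ⟨DE, hDE, hbE⟩ := ratio_hasFDerivAt V u hδ hEne hv
      obtain ⟨hrE0, hrE1⟩ := ratio_mem V u hv
      have h := (hDE.fun_mul hG).fun_add (hDΩ.fun_mul hone)
      refine ⟨_, by simpa only [pvE, if_neg hE, if_pos hv] using h, fun w => ?_⟩
      · have happ : (((score V u v / sSet V u E) • G + gfun c (sSet V u E) • DE) +
            ((score V u v / sSet V u Finset.univ) • (-G)
              + (1 - gfun c (sSet V u E)) • DΩ)) w
            = score V u v / sSet V u E * G w + gfun c (sSet V u E) * DE w
              + (-(score V u v / sSet V u Finset.univ * G w)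
              + (1 - gfun c (sSet V u E)) * DΩ w) := by
          simp
        rw [happ]
        set K := δ * ‖w‖ with hK
        have hK0 : (0:ℝ) ≤ K := by positivity
        have b1 : |score V u v / sSet V u E * G w| ≤ K := by
          rw [abs_mul, abs_of_nonneg hrE0]
          calc score V u v / sSet V u E * |G w| ≤ 1 * K :=
                mul_le_mul hrE1 (hbG w) (abs_nonneg _) zero_le_one
            _ = K := one_mul K
        have b2 : |gfun c (sSet V u E) * DE w| ≤ gfun c (sSet V u E) * (2 * K) := by
          rw [abs_mul, abs_of_nonneg hg0]
          exact mul_le_mul_of_nonneg_left (by simpa [hK, mul_assoc] using hbE w) hg0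
        have b3 : |(-(score V u v / sSet V u Finset.univ * G w))| ≤ K := by
          rw [abs_neg, abs_mul, abs_of_nonneg hrΩ0]
          calc score V u v / sSet V u Finset.univ * |G w| ≤ 1 * K :=
                mul_le_mul hrΩ1 (hbG w) (abs_nonneg _) zero_le_one
            _ = K := one_mul K
        have b4 : |(1 - gfun c (sSet V u E)) * DΩ w|
            ≤ (1 - gfun c (sSet V u E)) * (2 * K) := by
          rw [abs_mul, abs_of_nonneg (by linarith)]
          exact mul_le_mul_of_nonneg_left (by simpa [hK, mul_assoc] using hbΩ w)
            (by linarith)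
        have hid : gfun c (sSet V u E) * (2 * K)
            + (1 - gfun c (sSet V u E)) * (2 * K) = 2 * K := by ring
        have htri := abs_add_le (score V u v / sSet V u E * G w
            + gfun c (sSet V u E) * DE w)
          (-(score V u v / sSet V u Finset.univ * G w)
            + (1 - gfun c (sSet V u E)) * DΩ w)
        have htri1 := abs_add_le (score V u v / sSet V u E * G w)
          (gfun c (sSet V u E) * DE w)
        have htri2 := abs_add_le (-(score V u v / sSet V u Finset.univ * G w))
          ((1 - gfun c (sSet V u E)) * DΩ w)
        have : (5:ℝ) * δ * ‖w‖ = 5 * K := by rw [hK]; ring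
        rw [this]
        linarith
    · have h := hDΩ.fun_mul hone
      refine ⟨_, by simpa only [pvE, if_neg hE, if_neg hv] using h, fun w => ?_⟩
      · have happ : ((score V u v / sSet V u Finset.univ) • (-G)
            + (1 - gfun c (sSet V u E)) • DΩ) w
            = -(score V u v / sSet V u Finset.univ * G w)
              + (1 - gfun c (sSet V u E)) * DΩ w := by simp
        rw [happ]
        set K := δ * ‖w‖ with hK
        have hK0 : (0:ℝ) ≤ K := by positivity
        have b3 : |(-(score V u v / sSet V u Finset.univ * G w))| ≤ K := by
          rw [abs_neg, abs_mul, abs_of_nonneg hrΩ0]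
          calc score V u v / sSet V u Finset.univ * |G w| ≤ 1 * K :=
                mul_le_mul hrΩ1 (hbG w) (abs_nonneg _) zero_le_one
            _ = K := one_mul K
        have b4 : |(1 - gfun c (sSet V u E)) * DΩ w| ≤ 1 * (2 * K) := by
          rw [abs_mul, abs_of_nonneg (by linarith)]
          exact mul_le_mul (by linarith) (by simpa [hK, mul_assoc] using hbΩ w)
            (abs_nonneg _) zero_le_one
        have htri := abs_add_le (-(score V u v / sSet V u Finset.univ * G w))
          ((1 - gfun c (sSet V u E)) * DΩ w)
        have : (5:ℝ) * δ * ‖w‖ = 5 * K := by rw [hK]; ring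
        rw [this]
        linarith


lemma pv_hasFDerivAt [Nonempty ι] (V : ι → Vec d) (hδ : ∀ v, ‖V v‖ ≤ δ)
    {c : ℝ} (hc : 0 < c) (cand : Finset (Finset ι)) (pC : Finset ι → ℝ)
    (hpC0 : ∀ C ∈ cand, 0 ≤ pC C) (hpC1 : (∑ C ∈ cand, pC C) = 1)
    (π : Finset ι → Finset ι → ℝ) (hpol : ValidPolicy cand π) (v : ι) (u : Vec d) :
    ∃ D : Vec d →L[ℝ] ℝ,
      HasFDerivAt (fun u => pv V c cand pC π u v) D u ∧ ‖D‖ ≤ 5 * δ := by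
  have hδ0 : 0 ≤ δ := (norm_nonneg (V v)).trans (hδ v)
  choose D hD hb using fun E : Finset ι => pvE_hasFDerivAt V hδ hc E v u
  have hDnorm : ∀ E : Finset ι, ‖D E‖ ≤ 5 * δ := fun E =>
    ContinuousLinearMap.opNorm_le_bound _ (by positivity) fun w => by
      rw [Real.norm_eq_abs]; exact hb E w
  refine ⟨∑ C ∈ cand, pC C • ∑ E ∈ C.powerset, π C E • D E, ?_, ?_⟩
  · have h : HasFDerivAt
        (fun u => ∑ C ∈ cand, pC C * (∑ E ∈ C.powerset, π C E * pvE V c u E v))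
        (∑ C ∈ cand, pC C • ∑ E ∈ C.powerset, π C E • D E) u :=
      HasFDerivAt.fun_sum fun C _ =>
        (HasFDerivAt.fun_sum fun E _ => (hD E).const_mul (π C E)).const_mul (pC C)
    simpa only [pv] using h
  · refine ContinuousLinearMap.opNorm_le_bound _ (by positivity) fun w => ?_
    have happ : (∑ C ∈ cand, pC C • ∑ E ∈ C.powerset, π C E • D E) w
        = ∑ C ∈ cand, pC C * ∑ E ∈ C.powerset, π C E * D E w := by
      simp [Finset.mul_sum]
    rw [Real.norm_eq_abs, happ]
    have hCb : ∀ C ∈ cand,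
        |pC C * ∑ E ∈ C.powerset, π C E * D E w| ≤ pC C * (5 * δ * ‖w‖) := by
      intro C hC
      rw [abs_mul, abs_of_nonneg (hpC0 C hC)]
      refine mul_le_mul_of_nonneg_left ?_ (hpC0 C hC)
      have hEb : ∀ E ∈ C.powerset, |π C E * D E w| ≤ π C E * (5 * δ * ‖w‖) := by
        intro E hE
        rw [abs_mul, abs_of_nonneg ((hpol C hC).1 E hE)]
        exact mul_le_mul_of_nonneg_left (hb E w) ((hpol C hC).1 E hE)
      calc |∑ E ∈ C.powerset, π C E * D E w|
          ≤ ∑ E ∈ C.powerset, |π C E * D E w| := Finset.abs_sum_le_sum_abs _ _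
        _ ≤ ∑ E ∈ C.powerset, π C E * (5 * δ * ‖w‖) := Finset.sum_le_sum hEb
        _ = 5 * δ * ‖w‖ := by rw [← Finset.sum_mul, (hpol C hC).2, one_mul]
    calc |∑ C ∈ cand, pC C * ∑ E ∈ C.powerset, π C E * D E w|
        ≤ ∑ C ∈ cand, |pC C * ∑ E ∈ C.powerset, π C E * D E w| :=
          Finset.abs_sum_le_sum_abs _ _
      _ ≤ ∑ C ∈ cand, pC C * (5 * δ * ‖w‖) := Finset.sum_le_sum hCb
      _ = 5 * δ * ‖w‖ := by rw [← Finset.sum_mul, hpC1, one_mul]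


end Stmt15Aux

/-- If `‖v‖ ≤ δ` for all items `v`, then for every policy `π`, every item
`v`, every coordinate `i` and every `u`, `|∂p_v(π,u)/∂u_i| ≤ 5δ`; consequently the map
`u ↦ (p_v(π,u))_{v∈Ω}` from `ℝ^d` to `ℝ^n` (Euclidean norms) is Lipschitz with constant
`5δ√(nd)`, uniformly over policies. -/
theorem stmt15 {d : ℕ} {ι : Type} [Fintype ι] [DecidableEq ι] [Nonempty ι]
    (V : ι → Vec d) (hV : Function.Injective V)
    (Hset : Finset ι) (c : ℝ) (hc : 0 < c)
    (cand : Finset (Finset ι)) (hcand : ∀ C ∈ cand, Disjoint C Hset)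
    (pC : Finset ι → ℝ) (hpC0 : ∀ C ∈ cand, 0 ≤ pC C)
    (hpC1 : (∑ C ∈ cand, pC C) = 1)
    (δ : ℝ) (hδ : ∀ v : ι, ‖V v‖ ≤ δ) :
    (∀ π : Finset ι → Finset ι → ℝ, ValidPolicy cand π →
      ∀ (v : ι) (i : Fin d) (u : Vec d),
        |fderiv ℝ (fun u : Vec d => pv V c cand pC π u v) u
          (EuclideanSpace.single i (1:ℝ))| ≤ 5 * δ) ∧
    (∀ π : Finset ι → Finset ι → ℝ, ValidPolicy cand π →
      ∀ u u' : Vec d,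
        ‖((WithLp.equiv 2 (ι → ℝ)).symm fun v => pv V c cand pC π u v)
            - ((WithLp.equiv 2 (ι → ℝ)).symm fun v => pv V c cand pC π u' v)‖
          ≤ 5 * δ * Real.sqrt ((Fintype.card ι : ℝ) * (d : ℝ)) * ‖u - u'‖) := by
  classical
  have hδ0 : 0 ≤ δ := (norm_nonneg (V (Classical.arbitrary ι))).trans (hδ _)
  have key : ∀ π : Finset ι → Finset ι → ℝ, ValidPolicy cand π → ∀ (v : ι) (u : Vec d),
      ∃ D : Vec d →L[ℝ] ℝ,
        HasFDerivAt (fun u => pv V c cand pC π u v) D u ∧ ‖D‖ ≤ 5 * δ :=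
    fun π hpol v u => Stmt15Aux.pv_hasFDerivAt V hδ hc cand pC hpC0 hpC1 π hpol v u
  constructor
  · intro π hpol v i u
    obtain ⟨D, hD, hb⟩ := key π hpol v u
    rw [hD.fderiv]
    have h1 : ‖EuclideanSpace.single i (1:ℝ)‖ = 1 := by
      rw [EuclideanSpace.norm_single]; norm_num
    calc |D (EuclideanSpace.single i 1)| = ‖D (EuclideanSpace.single i 1)‖ :=
          (Real.norm_eq_abs _).symm
      _ ≤ ‖D‖ * ‖EuclideanSpace.single i (1:ℝ)‖ := D.le_opNorm _
      _ ≤ 5 * δ := by rw [h1, mul_one]; exact hb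
  · intro π hpol u u'
    have hlip : ∀ v : ι,
        |pv V c cand pC π u v - pv V c cand pC π u' v| ≤ 5 * δ * ‖u - u'‖ := by
      intro v
      choose D hD hb using key π hpol v
      have h := Convex.norm_image_sub_le_of_norm_hasFDerivWithin_le
        (f := fun u => pv V c cand pC π u v) (f' := D) (s := Set.univ)
        (fun x _ => (hD x).hasFDerivWithinAt) (fun x _ => hb x) convex_univ
        (Set.mem_univ u') (Set.mem_univ u)
      simpa [Real.norm_eq_abs] using h
    rcases Nat.eq_zero_or_pos d with hd | hd
    · have hu : u = u' := PiLp.ext fun i => absurd i.isLt (by omega)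
      simp [hu]
    · have hsub : ((WithLp.equiv 2 (ι → ℝ)).symm fun v => pv V c cand pC π u v)
          - ((WithLp.equiv 2 (ι → ℝ)).symm fun v => pv V c cand pC π u' v)
          = (WithLp.equiv 2 (ι → ℝ)).symm
              fun v => pv V c cand pC π u v - pv V c cand pC π u' v := rfl
      rw [hsub, EuclideanSpace.norm_eq]
      have hterm : ∀ v : ι,
          ‖((WithLp.equiv 2 (ι → ℝ)).symm
              fun v => pv V c cand pC π u v - pv V c cand pC π u' v) v‖ ^ 2
            ≤ (5 * δ * ‖u - u'‖) ^ 2 := by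
        intro v
        have : ‖((WithLp.equiv 2 (ι → ℝ)).symm
            fun v => pv V c cand pC π u v - pv V c cand pC π u' v) v‖
            = |pv V c cand pC π u v - pv V c cand pC π u' v| := rfl
        rw [this]
        exact pow_le_pow_left₀ (abs_nonneg _) (hlip v) 2
      have hsum : (∑ v : ι, ‖((WithLp.equiv 2 (ι → ℝ)).symm
            fun v => pv V c cand pC π u v - pv V c cand pC π u' v) v‖ ^ 2)
          ≤ (Fintype.card ι : ℝ) * (5 * δ * ‖u - u'‖) ^ 2 := by
        calc (∑ v : ι, ‖((WithLp.equiv 2 (ι → ℝ)).symm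
              fun v => pv V c cand pC π u v - pv V c cand pC π u' v) v‖ ^ 2)
            ≤ ∑ _v : ι, (5 * δ * ‖u - u'‖) ^ 2 :=
              Finset.sum_le_sum fun v _ => hterm v
          _ = (Fintype.card ι : ℝ) * (5 * δ * ‖u - u'‖) ^ 2 := by
              rw [Finset.sum_const, Finset.card_univ, nsmul_eq_mul]
      calc Real.sqrt (∑ v : ι, ‖((WithLp.equiv 2 (ι → ℝ)).symm
              fun v => pv V c cand pC π u v - pv V c cand pC π u' v) v‖ ^ 2)
          ≤ Real.sqrt ((Fintype.card ι : ℝ) * (5 * δ * ‖u - u'‖) ^ 2) :=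
            Real.sqrt_le_sqrt hsum
        _ = Real.sqrt (Fintype.card ι : ℝ) * (5 * δ * ‖u - u'‖) := by
            rw [Real.sqrt_mul (by positivity), Real.sqrt_sq (by positivity)]
        _ ≤ Real.sqrt ((Fintype.card ι : ℝ) * (d : ℝ)) * (5 * δ * ‖u - u'‖) := by
            refine mul_le_mul_of_nonneg_right (Real.sqrt_le_sqrt ?_) (by positivity)
            have : (1:ℝ) ≤ (d:ℝ) := by exact_mod_cast hd
            nlinarith [Nat.cast_nonneg (α := ℝ) (Fintype.card ι)]
        _ = 5 * δ * Real.sqrt ((Fintype.card ι : ℝ) * (d : ℝ)) * ‖u - u'‖ := by ring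

end
end
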